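/- Let l, m ≥ 1 with l+m+2 = n, and let (x,y) be a unit-speed solution on an interval of l y'/x - m x'/y - (x''y' - x'y'') + (n-1)H(s) = 0 with x, y > 0, for continuous H. Then for s in this interval, y(s)^m x'(s) = (n-1)∫₀^s H(t) y(t)^m y'(t) dt + l ∫₀^s (y(t)^m/x(t)) y'(t)² dt + y(0)^m x'(0). -/

import Mathlib

/-!
Differentiating the unit-speed condition gives `x' x'' + y' y'' = 0`, hence
`x'' = y' (x'' y' - x' y'')`: the acceleration is the curvature times `y'`. Substituting the
curvature from the mean-curvature equation turns `(y^m x')' = m y^(m-1) y' x' + y^m x''` into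
`(n-1) H y^m y' + l (y^m / x) y'^2`, and the fundamental theorem of calculus integrates this.
-/

open Set Filter Topology

lemma mul_add_mul_eq_zero_of_sq_add_sq_eventually_eq {p q : ℝ → ℝ} {p' q' t c : ℝ}
    (hp : HasDerivAt p p' t) (hq : HasDerivAt q q' t)
    (hpq : ∀ᶠ u in 𝓝 t, p u ^ 2 + q u ^ 2 = c) :
    p t * p' + q t * q' = 0 := by
  have hsum : HasDerivAt (fun u => p u ^ 2 + q u ^ 2) (2 * (p t * p' + q t * q')) t :=
    ((hp.fun_pow 2).fun_add (hq.fun_pow 2)).congr_deriv (by norm_num; ring)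
  have hconst : HasDerivAt (fun u => p u ^ 2 + q u ^ 2) 0 t :=
    (hasDerivAt_const t c).congr_of_eventuallyEq hpq
  linarith [hsum.unique hconst]

lemma eq_mul_sub_of_sq_add_sq_eq_one {p q p' q' : ℝ} (hunit : p ^ 2 + q ^ 2 = 1)
    (horth : p * p' + q * q' = 0) :
    p' = q * (p' * q - p * q') := by
  linear_combination (-p') * hunit + p * horth

lemma integral_eq_sub_of_hasDerivAt_Ioo_of_continuousOn_Ico {F f : ℝ → ℝ} {a b s : ℝ}
    (hF : ContinuousOn F (Ico a b)) (hderiv : ∀ t ∈ Ioo a b, HasDerivAt F (f t) t)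
    (hf : ContinuousOn f (Ico a b)) (hs : s ∈ Ico a b) :
    ∫ t in a..s, f t = F s - F a := by
  have hsub : Icc a s ⊆ Ico a b := Icc_subset_Ico_right hs.2
  exact intervalIntegral.integral_eq_sub_of_hasDerivAt_of_le hs.1 (hF.mono hsub)
    (fun t ht => hderiv t (Ioo_subset_Ioo_right hs.2.le ht))
    ((hf.mono hsub).intervalIntegrable_of_Icc hs.1)

lemma hasDerivAt_pow_mul_of_meanCurvature {x y x' y' : ℝ → ℝ} {x'' y'' t k c h : ℝ} {m : ℕ}
    (hy : HasDerivAt y (y' t) t) (hx' : HasDerivAt x' x'' t) (hy' : HasDerivAt y' y'' t)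
    (hunit : ∀ᶠ u in 𝓝 t, x' u ^ 2 + y' u ^ 2 = 1) (hy0 : y t ≠ 0)
    (heq : k * y' t / x t - m * x' t / y t - (x'' * y' t - x' t * y'') + c * h = 0) :
    HasDerivAt (fun u => y u ^ m * x' u)
      (c * (h * y t ^ m * y' t) + k * (y t ^ m / x t * y' t ^ 2)) t := by
  have hx'' : x'' = y' t * (x'' * y' t - x' t * y'') :=
    eq_mul_sub_of_sq_add_sq_eq_one hunit.self_of_nhds
      (mul_add_mul_eq_zero_of_sq_add_sq_eventually_eq hx' hy' hunit)
  have hpow : (m : ℝ) * y t ^ (m - 1) = m * y t ^ m / y t := by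
    rcases m with _ | m
    · simp
    · field_simp
      simp [pow_succ]
  refine ((hy.fun_pow m).mul hx').congr_deriv ?_
  have hcurv : x'' * y' t - x' t * y'' = k * y' t / x t - m * x' t / y t + c * h := by
    linear_combination -heq
  rw [hpow, hx'', hcurv]
  ring

theorem stmt_10_general (l m : ℕ) (b : ℝ)
    (H x y x' y' x'' y'' : ℝ → ℝ)
    (hx : ∀ s ∈ Set.Ico (0:ℝ) b, HasDerivWithinAt x (x' s) (Set.Ico 0 b) s)
    (hy : ∀ s ∈ Set.Ico (0:ℝ) b, HasDerivWithinAt y (y' s) (Set.Ico 0 b) s)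
    (hx' : ∀ s ∈ Set.Ico (0:ℝ) b, HasDerivWithinAt x' (x'' s) (Set.Ico 0 b) s)
    (hy' : ∀ s ∈ Set.Ico (0:ℝ) b, HasDerivWithinAt y' (y'' s) (Set.Ico 0 b) s)
    (hHc : ContinuousOn H (Set.Ico 0 b))
    (hxpos : ∀ s ∈ Set.Ico (0:ℝ) b, 0 < x s)
    (hypos : ∀ s ∈ Set.Ico (0:ℝ) b, 0 < y s)
    (hunit : ∀ s ∈ Set.Ico (0:ℝ) b, x' s ^ 2 + y' s ^ 2 = 1)
    (heq : ∀ s ∈ Set.Ico (0:ℝ) b,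
      (l:ℝ) * y' s / x s - (m:ℝ) * x' s / y s - (x'' s * y' s - x' s * y'' s)
        + ((l:ℝ) + (m:ℝ) + 1) * H s = 0) :
    ∀ s ∈ Set.Ico (0:ℝ) b,
      y s ^ m * x' s
        = ((l:ℝ) + (m:ℝ) + 1) * (∫ t in (0:ℝ)..s, H t * y t ^ m * y' t)
          + (l:ℝ) * (∫ t in (0:ℝ)..s, (y t ^ m / x t) * y' t ^ 2)
          + y 0 ^ m * x' 0 := by
  intro s hs
  have hnhds : ∀ t ∈ Ioo 0 b, Ico 0 b ∈ 𝓝 t := fun t ht => Ico_mem_nhds ht.1 ht.2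
  have hcy := HasDerivWithinAt.continuousOn hy
  have hcy' := HasDerivWithinAt.continuousOn hy'
  have hg₁ : ContinuousOn (fun t => H t * y t ^ m * y' t) (Ico 0 b) :=
    (hHc.mul (hcy.pow m)).mul hcy'
  have hg₂ : ContinuousOn (fun t => y t ^ m / x t * y' t ^ 2) (Ico 0 b) :=
    ((hcy.pow m).div (HasDerivWithinAt.continuousOn hx) fun t ht => (hxpos t ht).ne').mul (hcy'.pow 2)
  have hderiv : ∀ t ∈ Ioo 0 b, HasDerivAt (fun u => y u ^ m * x' u)
      (((l:ℝ) + m + 1) * (H t * y t ^ m * y' t) + l * (y t ^ m / x t * y' t ^ 2)) t := by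
    intro t ht
    have ht' := Ioo_subset_Ico_self ht
    exact hasDerivAt_pow_mul_of_meanCurvature ((hy t ht').hasDerivAt (hnhds t ht))
      ((hx' t ht').hasDerivAt (hnhds t ht)) ((hy' t ht').hasDerivAt (hnhds t ht))
      (eventually_of_mem (hnhds t ht) hunit) (hypos t ht').ne' (heq t ht')
  have hFTC := integral_eq_sub_of_hasDerivAt_Ioo_of_continuousOn_Ico
    (F := fun u => y u ^ m * x' u) ((hcy.pow m).mul (HasDerivWithinAt.continuousOn hx'))
    hderiv ((continuousOn_const.mul hg₁).add (continuousOn_const.mul hg₂)) hs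
  have hii : ∀ g : ℝ → ℝ, ContinuousOn g (Ico 0 b) →
      IntervalIntegrable g MeasureTheory.volume 0 s :=
    fun g hg => (hg.mono (Icc_subset_Ico_right hs.2)).intervalIntegrable_of_Icc hs.1
  rw [intervalIntegral.integral_add ((hii _ hg₁).const_mul _) ((hii _ hg₂).const_mul _),
    intervalIntegral.integral_const_mul, intervalIntegral.integral_const_mul] at hFTC
  linarith

/-- First integral of the mean-curvature equation for generating curves of generalized
rotational hypersurfaces of `O(l+1)×O(m+1)`-type (`n = l+m+2`):
`y^m x' = (n-1)∫₀^s H y^m y' + l ∫₀^s (y^m/x) y'² + y(0)^m x'(0)`. -/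
theorem stmt_10 (l m : ℕ) (hl : 1 ≤ l) (hm : 1 ≤ m) (b : ℝ) (hb : 0 < b)
    (H x y x' y' x'' y'' : ℝ → ℝ)
    (hx : ∀ s ∈ Set.Ico (0:ℝ) b, HasDerivWithinAt x (x' s) (Set.Ico 0 b) s)
    (hy : ∀ s ∈ Set.Ico (0:ℝ) b, HasDerivWithinAt y (y' s) (Set.Ico 0 b) s)
    (hx' : ∀ s ∈ Set.Ico (0:ℝ) b, HasDerivWithinAt x' (x'' s) (Set.Ico 0 b) s)
    (hy' : ∀ s ∈ Set.Ico (0:ℝ) b, HasDerivWithinAt y' (y'' s) (Set.Ico 0 b) s)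
    (hHc : ContinuousOn H (Set.Ico 0 b))
    (hxpos : ∀ s ∈ Set.Ico (0:ℝ) b, 0 < x s)
    (hypos : ∀ s ∈ Set.Ico (0:ℝ) b, 0 < y s)
    (hunit : ∀ s ∈ Set.Ico (0:ℝ) b, x' s ^ 2 + y' s ^ 2 = 1)
    (heq : ∀ s ∈ Set.Ico (0:ℝ) b,
      (l:ℝ) * y' s / x s - (m:ℝ) * x' s / y s - (x'' s * y' s - x' s * y'' s)
        + ((l:ℝ) + (m:ℝ) + 1) * H s = 0) :
    ∀ s ∈ Set.Ico (0:ℝ) b,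
      y s ^ m * x' s
        = ((l:ℝ) + (m:ℝ) + 1) * (∫ t in (0:ℝ)..s, H t * y t ^ m * y' t)
          + (l:ℝ) * (∫ t in (0:ℝ)..s, (y t ^ m / x t) * y' t ^ 2)
          + y 0 ^ m * x' 0 :=
  stmt_10_general l m b H x y x' y' x'' y'' hx hy hx' hy' hHc hxpos hypos hunit heq
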